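/- arXiv:2010.04790 — 2 statements merged into one kernel-verified Lean document; each statement's English description precedes it below -/
import Mathlib

section
/- For any q-partition V_0, …, V_{q−1} of G, if λ_q > 0 then modaldist ≤ (1/λ_q) · √(2/(n−q)) · avgrelout. -/
/-!
Expand `L ū_j` in the eigenbasis: by symmetry of `L` its coefficients are `λ_k ⟨ū_j, u_k⟩`, so by
Parseval the modes `k ≥ q` satisfy `λ_q² ∑_{k ≥ q} ⟨ū_j, u_k⟩² ≤ ‖L ū_j‖²`. On the other hand
`L ū_j` is `|V_j|^{-1/2}` times the outgoing weight at each vertex of `V_j` and minus the incoming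
weight at each vertex outside `V_j`; as the weights are nonnegative, each of these two blocks has
squared norm at most the square of its sum, which is `relout(V_j)²` in both cases. Summing over `j`
gives the bound.
-/

open Matrix

/-- The weighted degree matrix of `A`. -/
noncomputable def degMat {n : ℕ} (A : Matrix (Fin n) (Fin n) ℝ) :
    Matrix (Fin n) (Fin n) ℝ :=
  Matrix.diagonal (fun k => ∑ l, A k l)

/-- The graph Laplacian `L = D - A`. -/
noncomputable def lap {n : ℕ} (A : Matrix (Fin n) (Fin n) ℝ) :
    Matrix (Fin n) (Fin n) ℝ :=
  degMat A - A

/-- The unit vector that is uniform (`1/√|V j|`) on part `V j` and `0` elsewhere. -/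
noncomputable def ubar {n q : ℕ} (V : Fin q → Finset (Fin n)) (j : Fin q) :
    Fin n → ℝ :=
  fun i => if i ∈ V j then (Real.sqrt ((V j).card))⁻¹ else 0

/-- The relative outgoing weight of the part `V j`. -/
noncomputable def relout {n q : ℕ} (A : Matrix (Fin n) (Fin n) ℝ)
    (V : Fin q → Finset (Fin n)) (j : Fin q) : ℝ :=
  (Real.sqrt ((V j).card))⁻¹ * ∑ k ∈ V j, ∑ l ∈ (V j)ᶜ, A k l

/-- The average relative outgoing weight of a `q`-partition. -/
noncomputable def avgrelout {n q : ℕ} (A : Matrix (Fin n) (Fin n) ℝ)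
    (V : Fin q → Finset (Fin n)) : ℝ :=
  Real.sqrt ((1 / (q : ℝ)) * ∑ j : Fin q, (relout A V j) ^ 2)

/-- The `q`-modal distance of the graph from the partition, for an orthonormal family
of Laplacian eigenvectors `u` (ordered by increasing eigenvalue). -/
noncomputable def modaldist {n q : ℕ} (u : Fin n → Fin n → ℝ)
    (V : Fin q → Finset (Fin n)) : ℝ :=
  Real.sqrt ((1 / ((q : ℝ) * ((n : ℝ) - (q : ℝ)))) *
    ∑ j : Fin q, ∑ k ∈ Finset.univ.filter (fun k : Fin n => q ≤ (k : ℕ)),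
      (∑ a, ubar V j a * u k a) ^ 2)

theorem sum_sq_mul_le_sq_mul_sum_of_nonneg {ι : Type*} (s : Finset ι) (c : ℝ) {f : ι → ℝ}
    (hf : ∀ a ∈ s, 0 ≤ f a) :
    ∑ a ∈ s, (c * f a) ^ 2 ≤ (c * ∑ a ∈ s, f a) ^ 2 := by
  simp only [mul_pow, ← Finset.mul_sum]
  gcongr
  exact Finset.sum_sq_le_sq_sum_of_nonneg hf

section Spectral

variable {ι : Type*} [Fintype ι]

theorem sum_sq_dotProduct_eq_of_orthonormal [DecidableEq ι] (u : ι → ι → ℝ)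
    (horth : ∀ i j, u i ⬝ᵥ u j = if i = j then 1 else 0) (v : ι → ℝ) :
    ∑ k, (v ⬝ᵥ u k) ^ 2 = v ⬝ᵥ v := by
  have hU : Matrix.of u * (Matrix.of u)ᵀ = 1 := by
    ext i j
    simpa [Matrix.mul_apply, Matrix.one_apply, dotProduct] using horth i j
  calc ∑ k, (v ⬝ᵥ u k) ^ 2 = (Matrix.of u *ᵥ v) ⬝ᵥ (Matrix.of u *ᵥ v) := by
        simp only [sq, dotProduct, mulVec, Matrix.of_apply, mul_comm (v _)]
    _ = v ⬝ᵥ v := by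
        rw [dotProduct_mulVec, ← vecMul_transpose, vecMul_vecMul, mul_eq_one_comm.mp hU,
          vecMul_one]

theorem Matrix.IsSymm.mulVec_dotProduct_of_mulVec_eq_smul {M : Matrix ι ι ℝ} (hM : M.IsSymm)
    {w : ι → ℝ} {μ : ℝ} (hw : M *ᵥ w = μ • w) (x : ι → ℝ) :
    (M *ᵥ x) ⬝ᵥ w = μ * (x ⬝ᵥ w) := by
  rw [← vecMul_transpose, hM.eq, ← dotProduct_mulVec, hw, dotProduct_smul, smul_eq_mul]

theorem sq_mul_sum_sq_le_sum_sq_mul (lam c : ι → ℝ) (s : Finset ι) {μ : ℝ} (hμ : 0 ≤ μ)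
    (hs : ∀ k ∈ s, μ ≤ lam k) :
    μ ^ 2 * ∑ k ∈ s, c k ^ 2 ≤ ∑ k, (lam k * c k) ^ 2 :=
  calc μ ^ 2 * ∑ k ∈ s, c k ^ 2 ≤ ∑ k ∈ s, (lam k * c k) ^ 2 := by
        rw [Finset.mul_sum]
        refine Finset.sum_le_sum fun k hk => ?_
        rw [mul_pow]
        gcongr
        exact hs k hk
    _ ≤ ∑ k, (lam k * c k) ^ 2 :=
        Finset.sum_le_sum_of_subset_of_nonneg (Finset.subset_univ s) fun _ _ _ => sq_nonneg _

theorem sq_mul_sum_sq_dotProduct_le_of_eigenbasis [DecidableEq ι] {M : Matrix ι ι ℝ}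
    (hM : M.IsSymm) (u : ι → ι → ℝ) (horth : ∀ i j, u i ⬝ᵥ u j = if i = j then 1 else 0)
    (lam : ι → ℝ) (heig : ∀ i, M *ᵥ u i = lam i • u i) (s : Finset ι) {μ : ℝ} (hμ : 0 ≤ μ)
    (hs : ∀ k ∈ s, μ ≤ lam k) (x : ι → ℝ) :
    μ ^ 2 * ∑ k ∈ s, (x ⬝ᵥ u k) ^ 2 ≤ (M *ᵥ x) ⬝ᵥ (M *ᵥ x) :=
  calc _ ≤ ∑ k, (lam k * (x ⬝ᵥ u k)) ^ 2 := sq_mul_sum_sq_le_sum_sq_mul lam _ s hμ hs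
    _ = ∑ k, ((M *ᵥ x) ⬝ᵥ u k) ^ 2 := by
        simp only [hM.mulVec_dotProduct_of_mulVec_eq_smul (heig _)]
    _ = _ := sum_sq_dotProduct_eq_of_orthonormal u horth _

end Spectral

def cutWeight {n : ℕ} (A : Matrix (Fin n) (Fin n) ℝ) (S : Finset (Fin n)) : ℝ :=
  ∑ k ∈ S, ∑ l ∈ Sᶜ, A k l

section Laplacian

variable {n : ℕ} {A : Matrix (Fin n) (Fin n) ℝ}

theorem isSymm_lap (hA : A.IsSymm) : (lap A).IsSymm :=
  (isSymm_diagonal _).sub hA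

theorem lap_mulVec_apply (v : Fin n → ℝ) (a : Fin n) :
    (lap A *ᵥ v) a = ∑ b, A a b * (v a - v b) := by
  simp [lap, degMat, mulVec, dotProduct, sub_mul, diagonal_apply, ite_mul, mul_sub, Finset.sum_mul]

theorem lap_mulVec_ite_mem_apply (S : Finset (Fin n)) (c : ℝ) (a : Fin n) :
    (lap A *ᵥ fun i => if i ∈ S then c else 0) a =
      if a ∈ S then c * ∑ b ∈ Sᶜ, A a b else -(c * ∑ b ∈ S, A a b) := by
  rw [lap_mulVec_apply]
  by_cases ha : a ∈ S
  · simp only [ha, if_true]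
    rw [← Finset.sum_compl_add_sum S, Finset.sum_eq_zero (s := S) fun b hb => by simp [hb],
      add_zero, Finset.mul_sum]
    refine Finset.sum_congr rfl fun b hb => ?_
    rw [if_neg (Finset.mem_compl.1 hb)]
    ring
  · simp only [ha, if_false]
    rw [← Finset.sum_compl_add_sum S,
      Finset.sum_eq_zero (s := Sᶜ) fun b hb => by simp [Finset.mem_compl.1 hb],
      zero_add, Finset.mul_sum, ← Finset.sum_neg_distrib]
    refine Finset.sum_congr rfl fun b hb => ?_
    rw [if_pos hb]
    ring

theorem lap_mulVec_ite_mem_dotProduct_self_le (hA : A.IsSymm) (hnonneg : ∀ k l, 0 ≤ A k l)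
    (S : Finset (Fin n)) (c : ℝ) :
    (lap A *ᵥ fun i => if i ∈ S then c else 0) ⬝ᵥ (lap A *ᵥ fun i => if i ∈ S then c else 0)
      ≤ 2 * (c * cutWeight A S) ^ 2 := by
  have hweight : ∀ a (T : Finset (Fin n)), 0 ≤ ∑ b ∈ T, A a b :=
    fun a T => Finset.sum_nonneg fun b _ => hnonneg a b
  have hcut : ∑ a ∈ Sᶜ, ∑ b ∈ S, A a b = cutWeight A S :=
    Finset.sum_comm.trans
      (Finset.sum_congr rfl fun k _ => Finset.sum_congr rfl fun l _ => hA.apply k l)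
  calc _ = ∑ a ∈ S, (c * ∑ b ∈ Sᶜ, A a b) ^ 2 + ∑ a ∈ Sᶜ, (c * ∑ b ∈ S, A a b) ^ 2 := by
        rw [dotProduct, ← Finset.sum_add_sum_compl S]
        congr 1 <;> refine Finset.sum_congr rfl fun a ha => ?_
        · rw [← sq, lap_mulVec_ite_mem_apply, if_pos ha]
        · rw [← sq, lap_mulVec_ite_mem_apply, if_neg (Finset.mem_compl.1 ha), neg_sq]
    _ ≤ (c * cutWeight A S) ^ 2 + (c * cutWeight A S) ^ 2 := by
        gcongr
        · exact sum_sq_mul_le_sq_mul_sum_of_nonneg S c fun a _ => hweight a Sᶜ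
        · rw [← hcut]
          exact sum_sq_mul_le_sq_mul_sum_of_nonneg Sᶜ c fun a _ => hweight a S
    _ = 2 * (c * cutWeight A S) ^ 2 := by ring

end Laplacian

theorem stmt_2_general (n q : ℕ) (hqn : q < n)
    (A : Matrix (Fin n) (Fin n) ℝ)
    (hsymm : ∀ k l, A k l = A l k)
    (hnonneg : ∀ k l, 0 ≤ A k l)
    (lam : Fin n → ℝ)
    (hmono : Monotone lam)
    (u : Fin n → Fin n → ℝ)
    (horth : ∀ i j : Fin n, (∑ a, u i a * u j a) = if i = j then (1 : ℝ) else 0)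
    (heig : ∀ i : Fin n, (lap A).mulVec (u i) = lam i • u i)
    (V : Fin q → Finset (Fin n))
    (hlamq : 0 < lam ⟨q, hqn⟩) :
    modaldist u V
      ≤ (1 / lam ⟨q, hqn⟩) * Real.sqrt (2 / ((n : ℝ) - (q : ℝ))) * avgrelout A V := by
  set μ := lam ⟨q, hqn⟩
  have hA : A.IsSymm := IsSymm.ext fun k l => hsymm l k
  have hpart : ∀ j, μ ^ 2 * ∑ k ∈ Finset.univ.filter (fun k : Fin n => q ≤ (k : ℕ)),
      (ubar V j ⬝ᵥ u k) ^ 2 ≤ 2 * relout A V j ^ 2 := fun j =>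
    (sq_mul_sum_sq_dotProduct_le_of_eigenbasis (isSymm_lap hA) u horth lam heig _ hlamq.le
      (fun k hk => hmono (Fin.le_def.2 (Finset.mem_filter.1 hk).2)) (ubar V j)).trans
      (lap_mulVec_ite_mem_dotProduct_self_le hA hnonneg (V j) _)
  have hnq : 0 < (n : ℝ) - q := sub_pos.2 (by exact_mod_cast hqn)
  rw [modaldist, avgrelout, ← Real.sqrt_sq (one_div_pos.2 hlamq).le,
    ← Real.sqrt_mul (sq_nonneg _), ← Real.sqrt_mul (by positivity)]
  refine Real.sqrt_le_sqrt ?_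
  calc _ ≤ 1 / ((q : ℝ) * ((n : ℝ) - q)) * ∑ j : Fin q, 2 / μ ^ 2 * relout A V j ^ 2 := by
        refine mul_le_mul_of_nonneg_left (Finset.sum_le_sum fun j _ => ?_) (by positivity)
        rw [div_mul_eq_mul_div, le_div_iff₀ (by positivity), mul_comm]
        exact hpart j
    _ = _ := by rw [← Finset.mul_sum, one_div, mul_inv]; ring

/-- for any q-partition, if `λ_q > 0` then
`modaldist ≤ (1/λ_q) √(2/(n−q)) avgrelout`. -/
theorem stmt_2 (n q : ℕ) (hq1 : 1 ≤ q) (hqn : q < n)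
    (A : Matrix (Fin n) (Fin n) ℝ)
    (hsymm : ∀ k l, A k l = A l k)
    (hnonneg : ∀ k l, 0 ≤ A k l)
    (hdiag : ∀ k, A k k = 0)
    (lam : Fin n → ℝ)
    (hmono : Monotone lam)
    (hlam0 : lam ⟨0, Nat.lt_of_le_of_lt (Nat.zero_le q) hqn⟩ = 0)
    (u : Fin n → Fin n → ℝ)
    (horth : ∀ i j : Fin n, (∑ a, u i a * u j a) = if i = j then (1 : ℝ) else 0)
    (heig : ∀ i : Fin n, (lap A).mulVec (u i) = lam i • u i)
    (V : Fin q → Finset (Fin n))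
    (hne : ∀ j, (V j).Nonempty)
    (hdisj : ∀ j j' : Fin q, j ≠ j' → Disjoint (V j) (V j'))
    (hcover : ∀ i : Fin n, ∃ j : Fin q, i ∈ V j)
    (hlamq : 0 < lam ⟨q, hqn⟩) :
    modaldist u V
      ≤ (1 / lam ⟨q, hqn⟩) * Real.sqrt (2 / ((n : ℝ) - (q : ℝ))) * avgrelout A V :=
  stmt_2_general n q hqn A hsymm hnonneg lam hmono u horth heig V hlamq
end

section
/- Let â > 0, α̂ ∈ (0,1), β ∈ (0,1], and suppose λ_q > 0. Suppose there exists a q-partition V_0,…,V_{q−1} of G that is α-realizable for some α ∈ [0, α̂] and whose average relative outgoing weight satisfies avgrelout ∈ [β â, â/β]. Set ε = √(2q) â / (α̂ √(1−α̂²))^{1/2} and Ŭ = [u_0 ⋯ u_{q−1}]. Then εI + L is invertible and ‖Ŭ Ŭᵀ − ε (εI + L)^{−1}‖₂ / ‖Ŭ Ŭᵀ‖₂ < (1/β) √( α̂ / √(1−α̂²) ), where ‖·‖₂ is the matrix operator 2-norm. -/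
open Matrix

/-- The matrix operator 2-norm `‖M‖₂ = sup_{x≠0} ‖Mx‖₂/‖x‖₂`. -/
noncomputable def opNorm2 {n : ℕ} (M : Matrix (Fin n) (Fin n) ℝ) : ℝ :=
  ‖Matrix.toEuclideanCLM (𝕜 := ℝ) M‖

/-!
Write `L = Uᵀ diag(λ) U` with `U` orthogonal (rows `u_i`). Then `M = Uᵀ diag(1_{i<q}) U` has norm
`1`, and `M - ε (εI + L)⁻¹ = Uᵀ diag(c) U` with `c_i = 1_{i<q} - ε / (ε + λ_i)`, so the relative
error is `maxᵢ |c_i|`. For `i < q`, `|c_i| ≤ λ_{q-1} / ε`; Courant–Fischer on the span of the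
normalized indicator vectors of the partition (stacked as the rows of `X`) bounds
`λ_{q-1} ≤ ‖X L Xᵀ‖_F ≤ √(2q) · avgrelout ≤ √(2q) â / β`. For `i ≥ q`,
`|c_i| < ε / λ_q`, and realizability gives `λ_q ≥ √(2q) β â / α̂`. With the given `ε`
both bounds are below `(1/β) √(α̂ / √(1 - α̂²))`.
-/

open scoped Matrix.Norms.L2Operator

section Orthogonal

variable {ι : Type*} [Fintype ι] [DecidableEq ι] {U : Matrix ι ι ℝ}

lemma mem_unitary_of_mul_transpose_eq_one (hU : U * Uᵀ = 1) : U ∈ unitary (Matrix ι ι ℝ) := by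
  rw [← Matrix.unitaryGroup, Matrix.mem_unitaryGroup_iff, star_eq_conjTranspose,
    conjTranspose_eq_transpose_of_trivial, hU]

lemma l2_opNorm_transpose_mul_diagonal_mul (hU : U * Uᵀ = 1) (a : ι → ℝ) :
    ‖Uᵀ * diagonal a * U‖ = ‖a‖ := by
  have hUt : Uᵀ ∈ unitary (Matrix ι ι ℝ) := by
    have := Unitary.star_mem (mem_unitary_of_mul_transpose_eq_one hU)
    rwa [star_eq_conjTranspose, conjTranspose_eq_transpose_of_trivial] at this
  rw [CStarRing.norm_mul_mem_unitary _ (mem_unitary_of_mul_transpose_eq_one hU),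
    CStarRing.norm_mem_unitary_mul _ hUt, l2_opNorm_diagonal]

lemma transpose_mul_diagonal_mul_mul (hU : U * Uᵀ = 1) (a b : ι → ℝ) :
    (Uᵀ * diagonal a * U) * (Uᵀ * diagonal b * U) = Uᵀ * diagonal (a * b) * U := by
  simp only [Matrix.mul_assoc]
  rw [← Matrix.mul_assoc U, hU, Matrix.one_mul, ← Matrix.mul_assoc (diagonal a),
    diagonal_mul_diagonal]
  rfl

lemma transpose_mul_diagonal_mul_mul_inv (hU : U * Uᵀ = 1) {a : ι → ℝ} (ha : ∀ i, a i ≠ 0) :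
    (Uᵀ * diagonal a * U) * (Uᵀ * diagonal a⁻¹ * U) = 1 := by
  rw [transpose_mul_diagonal_mul_mul hU, show a * a⁻¹ = fun _ => 1 by ext i; simp [ha i],
    diagonal_one, Matrix.mul_one, mul_eq_one_comm.mp hU]

lemma smul_one_add_transpose_mul_diagonal_mul (hU : U * Uᵀ = 1) (c : ℝ) (a : ι → ℝ) :
    c • 1 + Uᵀ * diagonal a * U = Uᵀ * diagonal (fun i => c + a i) * U := by
  have hdiag : diagonal (fun i => c + a i) = c • 1 + diagonal a := by
    ext i j
    by_cases h : i = j <;> simp [h]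
  rw [hdiag, Matrix.mul_add, Matrix.add_mul, Matrix.mul_smul, Matrix.smul_mul, Matrix.mul_one,
    mul_eq_one_comm.mp hU]

lemma isUnit_smul_one_add (hU : U * Uᵀ = 1) {L : Matrix ι ι ℝ} {lam : ι → ℝ}
    (hL : L = Uᵀ * diagonal lam * U) {ε : ℝ} (hε : ∀ i, ε + lam i ≠ 0) :
    IsUnit (ε • 1 + L) := by
  rw [hL, smul_one_add_transpose_mul_diagonal_mul hU]
  exact IsUnit.of_mul_eq_one _ (transpose_mul_diagonal_mul_mul_inv hU hε)

lemma l2_opNorm_sub_smul_inv_smul_one_add (hU : U * Uᵀ = 1) {L M : Matrix ι ι ℝ}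
    {lam m : ι → ℝ} (hL : L = Uᵀ * diagonal lam * U) (hM : M = Uᵀ * diagonal m * U) {ε : ℝ}
    (hε : ∀ i, ε + lam i ≠ 0) :
    ‖M - ε • (ε • 1 + L)⁻¹‖ = ‖m - fun i => ε / (ε + lam i)‖ := by
  rw [hL, smul_one_add_transpose_mul_diagonal_mul hU,
    inv_eq_right_inv (transpose_mul_diagonal_mul_mul_inv hU hε), hM, ← Matrix.smul_mul,
    ← Matrix.mul_smul, ← diagonal_smul, ← Matrix.sub_mul, ← Matrix.mul_sub, diagonal_sub,
    l2_opNorm_transpose_mul_diagonal_mul hU]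
  rfl

lemma eq_transpose_mul_diagonal_mul_of_mulVec_eq_smul {L : Matrix ι ι ℝ} {lam : ι → ℝ}
    {u : ι → ι → ℝ} (hu : of u * (of u)ᵀ = 1) (heig : ∀ i, L *ᵥ u i = lam i • u i) :
    L = (of u)ᵀ * diagonal lam * of u := by
  have h : L * (of u)ᵀ = (of u)ᵀ * diagonal lam := by
    ext a i
    rw [mul_apply, mul_diagonal]
    simpa [mulVec, dotProduct, mul_comm] using congrFun (heig i) a
  rw [← h, Matrix.mul_assoc, mul_eq_one_comm.mp hu, Matrix.mul_one]

lemma eq_transpose_mul_diagonal_indicator_mul {M : Matrix ι ι ℝ} {u : ι → ι → ℝ}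
    (P : ι → Prop) [DecidablePred P]
    (hM : ∀ a b, M a b = ∑ l ∈ Finset.univ.filter P, u l a * u l b) :
    M = (of u)ᵀ * diagonal (fun i => if P i then 1 else 0) * of u := by
  ext a b
  rw [hM, mul_apply, Finset.sum_filter]
  simp only [mul_diagonal, transpose_apply, of_apply]
  exact Finset.sum_congr rfl fun i _ => by split_ifs <;> ring

end Orthogonal

section Coefficients

variable {ι : Type*} [Fintype ι] (P : ι → Prop) [DecidablePred P]

lemma norm_indicator_eq_one (h : ∃ i, P i) : ‖fun i => if P i then (1 : ℝ) else 0‖ = 1 := by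
  obtain ⟨i₀, hi₀⟩ := h
  refine le_antisymm ((pi_norm_le_iff_of_nonneg zero_le_one).mpr fun i => ?_) ?_
  · split_ifs <;> simp
  · simpa [hi₀] using norm_le_pi_norm (fun i => if P i then (1 : ℝ) else 0) i₀

lemma norm_indicator_sub_div_add_lt {lam : ι → ℝ} {ε R : ℝ} (hε : 0 < ε) (hR : 0 < R)
    (hlam : ∀ i, 0 ≤ lam i) (hlow : ∀ i, P i → lam i < R * ε)
    (hhigh : ∀ i, ¬P i → ε ≤ R * lam i) :
    ‖(fun i => if P i then (1 : ℝ) else 0) - fun i => ε / (ε + lam i)‖ < R := by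
  refine (pi_norm_lt_iff hR).mpr fun i => ?_
  have hpos : 0 < ε + lam i := by linarith [hlam i]
  simp only [Pi.sub_apply, Real.norm_eq_abs]
  split_ifs with h
  · rw [one_sub_div hpos.ne', add_sub_cancel_left, abs_of_nonneg (div_nonneg (hlam i) hpos.le),
      div_lt_iff₀ hpos]
    nlinarith [hlow i h, hlam i]
  · rw [zero_sub, abs_neg, abs_of_pos (div_pos hε hpos), div_lt_iff₀ hpos]
    nlinarith [hhigh i h]

end Coefficients

section QuadraticForms

lemma mul_mul_transpose_apply {m n : Type*} [Fintype n] (P : Matrix m n ℝ) (B : Matrix n n ℝ)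
    (i j : m) : (P * B * Pᵀ) i j = P i ⬝ᵥ B *ᵥ P j := by
  simp only [mul_apply, transpose_apply, dotProduct, mulVec, Finset.mul_sum, Finset.sum_mul]
  rw [Finset.sum_comm]
  exact Finset.sum_congr rfl fun _ _ => Finset.sum_congr rfl fun _ _ => by ring

lemma dotProduct_mul_mul_transpose_mulVec {m n : Type*} [Fintype m] [Fintype n]
    (P : Matrix m n ℝ) (B : Matrix n n ℝ) (x : m → ℝ) :
    x ⬝ᵥ (P * B * Pᵀ) *ᵥ x = (Pᵀ *ᵥ x) ⬝ᵥ B *ᵥ (Pᵀ *ᵥ x) := by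
  rw [← mulVec_mulVec, ← mulVec_mulVec, dotProduct_mulVec, ← mulVec_transpose]

lemma mul_dotProduct_le_dotProduct_mulVec {ι : Type*} [Fintype ι] [LinearOrder ι]
    {U : Matrix ι ι ℝ} (hU : U * Uᵀ = 1) {lam : ι → ℝ} (hmono : Monotone lam) {p : ι}
    {y : ι → ℝ} (hy : ∀ i < p, (U *ᵥ y) i = 0) :
    lam p * (y ⬝ᵥ y) ≤ y ⬝ᵥ (Uᵀ * diagonal lam * U) *ᵥ y := by
  have hyy : y ⬝ᵥ y = (U *ᵥ y) ⬝ᵥ (U *ᵥ y) := by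
    simpa [mul_eq_one_comm.mp hU] using dotProduct_mul_mul_transpose_mulVec Uᵀ 1 y
  have hyLy := dotProduct_mul_mul_transpose_mulVec Uᵀ (diagonal lam) y
  rw [transpose_transpose] at hyLy
  rw [hyy, hyLy]
  simp only [dotProduct, mulVec_diagonal, Finset.mul_sum]
  refine Finset.sum_le_sum fun i _ => ?_
  rcases lt_or_ge i p with hi | hi
  · simp [hy i hi]
  · nlinarith [hmono hi, mul_self_nonneg ((U *ᵥ y) i)]

lemma dotProduct_mulVec_le_sqrt_sum_sq {κ : Type*} [Fintype κ] (Q : Matrix κ κ ℝ)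
    (z : κ → ℝ) : z ⬝ᵥ Q *ᵥ z ≤ √(∑ i, ∑ j, Q i j ^ 2) * (z ⬝ᵥ z) := by
  have hzz : ∑ p : κ × κ, (z p.1 * z p.2) ^ 2 = (z ⬝ᵥ z) ^ 2 := by
    simp only [Fintype.sum_prod_type, dotProduct, sq, Finset.sum_mul_sum]
    exact Finset.sum_congr rfl fun i _ => Finset.sum_congr rfl fun j _ => by ring
  have hz : 0 ≤ z ⬝ᵥ z := Finset.sum_nonneg fun i _ => mul_self_nonneg (z i)
  calc z ⬝ᵥ Q *ᵥ z = ∑ p : κ × κ, Q p.1 p.2 * (z p.1 * z p.2) := by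
        simp only [Fintype.sum_prod_type, dotProduct, mulVec, Finset.mul_sum]
        exact Finset.sum_congr rfl fun i _ => Finset.sum_congr rfl fun j _ => by ring
    _ ≤ √(∑ p : κ × κ, Q p.1 p.2 ^ 2) * √(∑ p : κ × κ, (z p.1 * z p.2) ^ 2) :=
        Real.sum_mul_le_sqrt_mul_sqrt _ _ _
    _ = √(∑ i, ∑ j, Q i j ^ 2) * (z ⬝ᵥ z) := by
        rw [hzz, Real.sqrt_sq hz, Fintype.sum_prod_type]

lemma exists_ne_zero_mulVec_eq_zero {K κ ι : Type*} [Field K] [Fintype κ] [Fintype ι]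
    (W : Matrix κ ι K) (h : Fintype.card κ < Fintype.card ι) : ∃ z ≠ 0, W *ᵥ z = 0 := by
  have hker : LinearMap.ker W.mulVecLin ≠ ⊥ :=
    LinearMap.ker_ne_bot_of_finrank_lt (by simpa using h)
  obtain ⟨z, hz, hz0⟩ := (Submodule.ne_bot_iff _).mp hker
  exact ⟨z, hz0, hz⟩

end QuadraticForms

section Partition

variable {ι κ : Type*}

noncomputable def partitionMatrix (V : κ → Finset ι) : Matrix κ ι ℝ :=
  of fun j => (√(V j).card)⁻¹ • ((V j : Set ι).indicator 1)

lemma partitionMatrix_row (V : κ → Finset ι) (j : κ) :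
    partitionMatrix V j = (√(V j).card)⁻¹ • ((V j : Set ι).indicator 1) := rfl

variable [Fintype ι] [DecidableEq ι] (A : Matrix ι ι ℝ)

def cut (S T : Finset ι) : ℝ := ∑ k ∈ S, ∑ l ∈ T, A k l

lemma indicator_dotProduct (S : Finset ι) (v : ι → ℝ) :
    (S : Set ι).indicator 1 ⬝ᵥ v = ∑ a ∈ S, v a := by
  simp [dotProduct, Set.indicator_apply, Finset.sum_ite_mem]

lemma mulVec_indicator (T : Finset ι) (a : ι) :
    (A *ᵥ (T : Set ι).indicator 1) a = ∑ b ∈ T, A a b := by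
  rw [mulVec, dotProduct_comm, indicator_dotProduct]

lemma cut_inter_univ_sub_cut_self (S : Finset ι) :
    cut A (S ∩ S) Finset.univ - cut A S S = cut A S Sᶜ := by
  rw [Finset.inter_self, sub_eq_iff_eq_add', cut, cut, cut, ← Finset.sum_add_distrib]
  exact Finset.sum_congr rfl fun k _ => (Finset.sum_add_sum_compl S _).symm

lemma sum_cut_erase_le [Fintype κ] [DecidableEq κ] (hnonneg : ∀ k l, 0 ≤ A k l)
    {V : κ → Finset ι} (hdisj : ∀ j j', j ≠ j' → Disjoint (V j) (V j')) (j : κ) :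
    ∑ j' ∈ Finset.univ.erase j, cut A (V j) (V j') ≤ cut A (V j) (V j)ᶜ := by
  have hsub : (Finset.univ.erase j).biUnion V ⊆ (V j)ᶜ := by
    intro l hl
    obtain ⟨j', hj', hl'⟩ := Finset.mem_biUnion.mp hl
    exact Finset.mem_compl.mpr fun hl'' =>
      Finset.disjoint_left.mp (hdisj j' j (Finset.ne_of_mem_erase hj')) hl' hl''
  calc ∑ j' ∈ Finset.univ.erase j, cut A (V j) (V j')
      = cut A (V j) ((Finset.univ.erase j).biUnion V) :=
        Finset.sum_comm.trans <| Finset.sum_congr rfl fun k _ =>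
          (Finset.sum_biUnion fun j₁ _ j₂ _ h => hdisj j₁ j₂ h).symm
    _ ≤ cut A (V j) (V j)ᶜ :=
        Finset.sum_le_sum fun k _ =>
          Finset.sum_le_sum_of_subset_of_nonneg hsub fun l _ _ => hnonneg k l

lemma partitionMatrix_mul_transpose [DecidableEq κ] {V : κ → Finset ι}
    (hne : ∀ j, (V j).Nonempty) (hdisj : ∀ j j', j ≠ j' → Disjoint (V j) (V j')) :
    partitionMatrix V * (partitionMatrix V)ᵀ = 1 := by
  ext j j'
  rw [mul_apply']
  change partitionMatrix V j ⬝ᵥ partitionMatrix V j' = _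
  rw [partitionMatrix_row, partitionMatrix_row, dotProduct_smul, smul_dotProduct,
    indicator_dotProduct, smul_eq_mul, smul_eq_mul]
  by_cases h : j = j'
  · subst h
    have hcard : (0 : ℝ) < (V j).card := by exact_mod_cast (hne j).card_pos
    rw [one_apply_eq,
      Finset.sum_congr rfl fun a ha => Set.indicator_of_mem (Finset.mem_coe.mpr ha) 1]
    simp only [Pi.one_apply, Finset.sum_const, nsmul_eq_mul, mul_one]
    rw [← mul_assoc, ← mul_inv, Real.mul_self_sqrt hcard.le, inv_mul_cancel₀ hcard.ne']
  · rw [Finset.sum_eq_zero fun a ha => Set.indicator_of_notMem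
      (fun ha' => Finset.disjoint_left.mp (hdisj j j' h) ha ha') 1, one_apply_ne h, mul_zero,
      mul_zero]

end Partition

section Laplacian

variable {n q : ℕ} (A : Matrix (Fin n) (Fin n) ℝ)

lemma indicator_dotProduct_lap_mulVec_indicator (S T : Finset (Fin n)) :
    (S : Set (Fin n)).indicator 1 ⬝ᵥ lap A *ᵥ (T : Set (Fin n)).indicator 1
      = cut A (S ∩ T) Finset.univ - cut A S T := by
  rw [lap, degMat, sub_mulVec, dotProduct_sub, indicator_dotProduct, indicator_dotProduct]
  simp [mulVec_indicator, mulVec_diagonal, Set.indicator_apply, cut, Finset.sum_ite_mem]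

lemma partitionMatrix_mul_lap_mul_transpose_apply {κ : Type*} (V : κ → Finset (Fin n))
    (j j' : κ) :
    (partitionMatrix V * lap A * (partitionMatrix V)ᵀ) j j'
      = (√(V j).card)⁻¹ * (√(V j').card)⁻¹
        * (cut A (V j ∩ V j') Finset.univ - cut A (V j) (V j')) := by
  rw [mul_mul_transpose_apply, partitionMatrix_row, partitionMatrix_row, mulVec_smul,
    dotProduct_smul, smul_dotProduct, indicator_dotProduct_lap_mulVec_indicator, smul_eq_mul,
    smul_eq_mul]
  ring

lemma sum_sq_partitionMatrix_mul_lap_mul_transpose_le (hnonneg : ∀ k l, 0 ≤ A k l)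
    {V : Fin q → Finset (Fin n)} (hne : ∀ j, (V j).Nonempty)
    (hdisj : ∀ j j', j ≠ j' → Disjoint (V j) (V j')) (j : Fin q) :
    ∑ j', (partitionMatrix V * lap A * (partitionMatrix V)ᵀ) j j' ^ 2
      ≤ 2 * relout A V j ^ 2 := by
  set r : Fin q → ℝ := fun j => (√(V j).card)⁻¹
  have hr : ∀ j, 0 ≤ r j ∧ r j ^ 2 ≤ 1 := fun j => by
    have : (1 : ℝ) ≤ √(V j).card := Real.one_le_sqrt.mpr (by exact_mod_cast (hne j).card_pos)
    exact ⟨by positivity, pow_le_one₀ (by positivity) (inv_le_one_of_one_le₀ this)⟩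
  have hrelout : relout A V j = r j * cut A (V j) (V j)ᶜ := rfl
  have hcut_nonneg : ∀ j', 0 ≤ cut A (V j) (V j') := fun j' =>
    Finset.sum_nonneg fun k _ => Finset.sum_nonneg fun l _ => hnonneg k l
  have hdiag : (partitionMatrix V * lap A * (partitionMatrix V)ᵀ) j j ^ 2
      ≤ relout A V j ^ 2 := by
    rw [partitionMatrix_mul_lap_mul_transpose_apply, cut_inter_univ_sub_cut_self, mul_assoc,
      ← hrelout, mul_pow]
    exact mul_le_of_le_one_left (sq_nonneg _) (hr j).2
  have hoff : ∑ j' ∈ Finset.univ.erase j,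
      (partitionMatrix V * lap A * (partitionMatrix V)ᵀ) j j' ^ 2 ≤ relout A V j ^ 2 :=
    calc ∑ j' ∈ Finset.univ.erase j,
          (partitionMatrix V * lap A * (partitionMatrix V)ᵀ) j j' ^ 2
        = ∑ j' ∈ Finset.univ.erase j, r j' ^ 2 * (r j ^ 2 * cut A (V j) (V j') ^ 2) := by
          refine Finset.sum_congr rfl fun j' hj' => ?_
          rw [partitionMatrix_mul_lap_mul_transpose_apply,
            Finset.disjoint_iff_inter_eq_empty.mp (hdisj j j' (Finset.ne_of_mem_erase hj').symm)]
          simp only [cut, Finset.sum_empty]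
          ring
      _ ≤ r j ^ 2 * ∑ j' ∈ Finset.univ.erase j, cut A (V j) (V j') ^ 2 := by
          rw [Finset.mul_sum]
          exact Finset.sum_le_sum fun j' _ => mul_le_of_le_one_left (by positivity) (hr j').2
      _ ≤ r j ^ 2 * (∑ j' ∈ Finset.univ.erase j, cut A (V j) (V j')) ^ 2 := by
          gcongr
          exact Finset.sum_sq_le_sq_sum_of_nonneg fun j' _ => hcut_nonneg j'
      _ ≤ r j ^ 2 * cut A (V j) (V j)ᶜ ^ 2 := by
          gcongr
          · exact Finset.sum_nonneg fun j' _ => hcut_nonneg j'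
          · exact sum_cut_erase_le A hnonneg hdisj j
      _ = relout A V j ^ 2 := by rw [hrelout, mul_pow]
  rw [← Finset.add_sum_erase _ _ (Finset.mem_univ j)]
  linarith

lemma sqrt_two_mul_mul_avgrelout (hq : q ≠ 0) (V : Fin q → Finset (Fin n)) :
    √(2 * q) * avgrelout A V = √(2 * ∑ j, relout A V j ^ 2) := by
  rw [avgrelout, ← Real.sqrt_mul (by positivity)]
  congr 1
  field_simp

end Laplacian

lemma lam_le_sqrt_mul_avgrelout {n q : ℕ} (hq1 : 1 ≤ q) (hqn : q ≤ n) {A : Matrix (Fin n) (Fin n) ℝ}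
    (hnonneg : ∀ k l, 0 ≤ A k l) {lam : Fin n → ℝ} (hmono : Monotone lam)
    {U : Matrix (Fin n) (Fin n) ℝ} (hU : U * Uᵀ = 1) (hL : lap A = Uᵀ * diagonal lam * U)
    {V : Fin q → Finset (Fin n)} (hne : ∀ j, (V j).Nonempty)
    (hdisj : ∀ j j', j ≠ j' → Disjoint (V j) (V j')) :
    lam ⟨q - 1, by omega⟩ ≤ √(2 * q) * avgrelout A V := by
  set X := partitionMatrix V
  set Q := X * lap A * Xᵀ
  -- `q` unknowns, `q - 1` linear conditions: some `y = Xᵀ z ≠ 0` is orthogonal to `u_0, …, u_{q-2}`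
  obtain ⟨z, hz0, hWz⟩ := exists_ne_zero_mulVec_eq_zero
    ((U * Xᵀ).submatrix (Fin.castLE (by omega : q - 1 ≤ n)) id) (by simp; omega)
  set y := Xᵀ *ᵥ z
  have hy : ∀ i < (⟨q - 1, by omega⟩ : Fin n), (U *ᵥ y) i = 0 := by
    intro i hi
    have h : ((U * Xᵀ) *ᵥ z) i = 0 := congrFun hWz ⟨i, hi⟩
    rwa [← mulVec_mulVec] at h
  have hyy : y ⬝ᵥ y = z ⬝ᵥ z := by
    simpa [X, partitionMatrix_mul_transpose hne hdisj] using
      (dotProduct_mul_mul_transpose_mulVec X 1 z).symm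
  have hzz : 0 < z ⬝ᵥ z := lt_of_le_of_ne (Finset.sum_nonneg fun i _ => mul_self_nonneg (z i))
    (Ne.symm (dotProduct_self_eq_zero.not.mpr hz0))
  have hQ : √(∑ j, ∑ j', Q j j' ^ 2) ≤ √(2 * q) * avgrelout A V := by
    rw [sqrt_two_mul_mul_avgrelout A (by omega), Finset.mul_sum]
    exact Real.sqrt_le_sqrt (Finset.sum_le_sum fun j _ =>
      sum_sq_partitionMatrix_mul_lap_mul_transpose_le A hnonneg hne hdisj j)
  refine le_of_mul_le_mul_right ?_ hzz
  calc lam ⟨q - 1, by omega⟩ * (z ⬝ᵥ z) = lam ⟨q - 1, by omega⟩ * (y ⬝ᵥ y) := by rw [hyy]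
    _ ≤ y ⬝ᵥ lap A *ᵥ y := hL ▸ mul_dotProduct_le_dotProduct_mulVec hU hmono hy
    _ = z ⬝ᵥ Q *ᵥ z := (dotProduct_mul_mul_transpose_mulVec X (lap A) z).symm
    _ ≤ √(∑ j, ∑ j', Q j j' ^ 2) * (z ⬝ᵥ z) := dotProduct_mulVec_le_sqrt_sum_sq Q z
    _ ≤ √(2 * q) * avgrelout A V * (z ⬝ᵥ z) := by gcongr

lemma resolvent_shift_relations {κ αhat β ε : ℝ} (hκ : 0 < κ) (hα0 : 0 < αhat)
    (hα1 : αhat < 1) (hβ : 0 < β) (hε : ε = κ / √(αhat * √(1 - αhat ^ 2))) :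
    0 < ε ∧ 0 < 1 / β * √(αhat / √(1 - αhat ^ 2)) ∧
      κ / β < 1 / β * √(αhat / √(1 - αhat ^ 2)) * ε ∧
      1 / β * √(αhat / √(1 - αhat ^ 2)) * (β * κ / αhat) = ε := by
  set s := √(1 - αhat ^ 2)
  have hs0 : 0 < s := Real.sqrt_pos.mpr (by nlinarith)
  have hs1 : s < 1 := by nlinarith [Real.sq_sqrt (by nlinarith : 0 ≤ 1 - αhat ^ 2)]
  set t := √(αhat * s)
  have ht0 : 0 < t := Real.sqrt_pos.mpr (by positivity)
  have ht2 : t ^ 2 = αhat * s := Real.sq_sqrt (by positivity)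
  have hR : √(αhat / s) = t / s := by
    rw [show αhat / s = αhat * s / s ^ 2 by field_simp, Real.sqrt_div' _ (by positivity),
      Real.sqrt_sq hs0.le]
  rw [hR, hε]
  refine ⟨by positivity, by positivity, ?_, ?_⟩
  · rw [show 1 / β * (t / s) * (κ / t) = κ / β * (1 / s) by field_simp]
    exact lt_mul_of_one_lt_right (by positivity) (one_lt_one_div hs0 hs1)
  · field_simp
    linear_combination ht2

theorem stmt_9_general (n q : ℕ) (hq1 : 1 ≤ q) (hqn : q < n)
    (A : Matrix (Fin n) (Fin n) ℝ)
    (hnonneg : ∀ k l, 0 ≤ A k l)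
    (lam : Fin n → ℝ)
    (hmono : Monotone lam)
    (hlam0 : lam ⟨0, Nat.lt_of_le_of_lt (Nat.zero_le q) hqn⟩ = 0)
    (u : Fin n → Fin n → ℝ)
    (horth : ∀ i j : Fin n, (∑ a, u i a * u j a) = if i = j then (1 : ℝ) else 0)
    (heig : ∀ i : Fin n, (lap A).mulVec (u i) = lam i • u i)
    (ahat αhat β : ℝ)
    (hahat : 0 < ahat) (hαhat0 : 0 < αhat) (hαhat1 : αhat < 1)
    (hβ0 : 0 < β)
    -- there is a q-partition that is α-realizable for some α ∈ [0, α̂]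
    -- and whose average relative outgoing weight lies in [β â, â/β]
    (hexists : ∃ V : Fin q → Finset (Fin n),
      (∀ j, (V j).Nonempty) ∧
      (∀ j j' : Fin q, j ≠ j' → Disjoint (V j) (V j')) ∧
      (∀ i : Fin n, ∃ j : Fin q, i ∈ V j) ∧
      (∃ α : ℝ, 0 ≤ α ∧ α ≤ αhat ∧
        avgrelout A V ≤ α * lam ⟨q, hqn⟩ / Real.sqrt (2 * q)) ∧
      β * ahat ≤ avgrelout A V ∧ avgrelout A V ≤ ahat / β)
    (ε : ℝ)
    (hε : ε = Real.sqrt (2 * q) * ahat / Real.sqrt (αhat * Real.sqrt (1 - αhat ^ 2)))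
    -- M = Ŭ Ŭᵀ where Ŭ = [u_0 ⋯ u_{q-1}]
    (M : Matrix (Fin n) (Fin n) ℝ)
    (hM : ∀ a b, M a b = ∑ l ∈ Finset.univ.filter (fun l : Fin n => (l : ℕ) < q),
      u l a * u l b) :
    IsUnit (ε • (1 : Matrix (Fin n) (Fin n) ℝ) + lap A) ∧
    opNorm2 (M - ε • (ε • (1 : Matrix (Fin n) (Fin n) ℝ) + lap A)⁻¹) / opNorm2 M
      < (1 / β) * Real.sqrt (αhat / Real.sqrt (1 - αhat ^ 2)) := by
  obtain ⟨V, hne, hdisj, -, ⟨α, -, hα, hreal⟩, hlow, hupp⟩ := hexists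
  have hU : of u * (of u)ᵀ = 1 := by
    ext i j
    simpa [mul_apply, one_apply] using horth i j
  have hL := eq_transpose_mul_diagonal_mul_of_mulVec_eq_smul hU heig
  have hM' := eq_transpose_mul_diagonal_indicator_mul (fun i : Fin n => (i : ℕ) < q) hM
  have hlam : ∀ i, 0 ≤ lam i := fun i => hlam0 ▸ hmono (Fin.mk_le_mk.mpr (Nat.zero_le i))
  obtain ⟨hε0, hR0, hκR, hRε⟩ := resolvent_shift_relations (κ := √(2 * q) * ahat)
    (by positivity) hαhat0 hαhat1 hβ0 hε
  have hεlam : ∀ i, ε + lam i ≠ 0 := fun i => by linarith [hlam i]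
  have hlamq : β * (√(2 * q) * ahat) / αhat ≤ lam ⟨q, hqn⟩ := by
    have := hlow.trans hreal
    rw [le_div_iff₀ (by positivity)] at this
    rw [div_le_iff₀ hαhat0]
    nlinarith [hlam ⟨q, hqn⟩]
  refine ⟨isUnit_smul_one_add hU hL hεlam, ?_⟩
  rw [opNorm2, opNorm2, l2_opNorm_toEuclideanCLM, l2_opNorm_toEuclideanCLM,
    l2_opNorm_sub_smul_inv_smul_one_add hU hL hM' hεlam, hM',
    l2_opNorm_transpose_mul_diagonal_mul hU, norm_indicator_eq_one _ ⟨⟨0, by omega⟩, hq1⟩,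
    div_one]
  refine norm_indicator_sub_div_add_lt _ hε0 hR0 hlam (fun i hi => ?_) (fun i hi => ?_)
  · calc lam i ≤ lam ⟨q - 1, by omega⟩ := hmono (Fin.mk_le_mk.mpr (by omega))
      _ ≤ √(2 * q) * avgrelout A V :=
        lam_le_sqrt_mul_avgrelout hq1 hqn.le hnonneg hmono hU hL hne hdisj
      _ ≤ √(2 * q) * ahat / β := by rw [mul_div_assoc]; gcongr
      _ < _ := hκR
  · calc ε = _ := hRε.symm
      _ ≤ _ * lam ⟨q, hqn⟩ := by gcongr
      _ ≤ _ := by gcongr; exact hmono (Fin.mk_le_mk.mpr (by omega))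

/-- approximation for mode-independent computation. -/
theorem stmt_9 (n q : ℕ) (hq1 : 1 ≤ q) (hqn : q < n)
    (A : Matrix (Fin n) (Fin n) ℝ)
    (hsymm : ∀ k l, A k l = A l k)
    (hnonneg : ∀ k l, 0 ≤ A k l)
    (hdiag : ∀ k, A k k = 0)
    (lam : Fin n → ℝ)
    (hmono : Monotone lam)
    (hlam0 : lam ⟨0, Nat.lt_of_le_of_lt (Nat.zero_le q) hqn⟩ = 0)
    (u : Fin n → Fin n → ℝ)
    (horth : ∀ i j : Fin n, (∑ a, u i a * u j a) = if i = j then (1 : ℝ) else 0)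
    (heig : ∀ i : Fin n, (lap A).mulVec (u i) = lam i • u i)
    (hlamq : 0 < lam ⟨q, hqn⟩)
    (ahat αhat β : ℝ)
    (hahat : 0 < ahat) (hαhat0 : 0 < αhat) (hαhat1 : αhat < 1)
    (hβ0 : 0 < β) (hβ1 : β ≤ 1)
    -- there is a q-partition that is α-realizable for some α ∈ [0, α̂]
    -- and whose average relative outgoing weight lies in [β â, â/β]
    (hexists : ∃ V : Fin q → Finset (Fin n),
      (∀ j, (V j).Nonempty) ∧
      (∀ j j' : Fin q, j ≠ j' → Disjoint (V j) (V j')) ∧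
      (∀ i : Fin n, ∃ j : Fin q, i ∈ V j) ∧
      (∃ α : ℝ, 0 ≤ α ∧ α ≤ αhat ∧
        avgrelout A V ≤ α * lam ⟨q, hqn⟩ / Real.sqrt (2 * q)) ∧
      β * ahat ≤ avgrelout A V ∧ avgrelout A V ≤ ahat / β)
    (ε : ℝ)
    (hε : ε = Real.sqrt (2 * q) * ahat / Real.sqrt (αhat * Real.sqrt (1 - αhat ^ 2)))
    -- M = Ŭ Ŭᵀ where Ŭ = [u_0 ⋯ u_{q-1}]
    (M : Matrix (Fin n) (Fin n) ℝ)
    (hM : ∀ a b, M a b = ∑ l ∈ Finset.univ.filter (fun l : Fin n => (l : ℕ) < q),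
      u l a * u l b) :
    IsUnit (ε • (1 : Matrix (Fin n) (Fin n) ℝ) + lap A) ∧
    opNorm2 (M - ε • (ε • (1 : Matrix (Fin n) (Fin n) ℝ) + lap A)⁻¹) / opNorm2 M
      < (1 / β) * Real.sqrt (αhat / Real.sqrt (1 - αhat ^ 2)) :=
  stmt_9_general n q hq1 hqn A hnonneg lam hmono hlam0 u horth heig ahat αhat β hahat hαhat0 hαhat1
    hβ0 hexists ε hε M hM
end
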